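/- The group with presentation ⟨x2, x3 | x2 = (x2 x3)^{n+1} x3 (x3^{-1} x2^{-1})^{n+1}⟩ is isomorphic to the fundamental group of the complement of the (2, 2n+1) torus knot, i.e., to the group ⟨a, b | a^2 = b^{2n+1}⟩; consequently, for distinct n these groups are pairwise non-isomorphic. -/

import Mathlib

/-!
With `c = x₂x₃` the braid relation reads `x₂ cⁿ x₂ = cⁿ⁺¹`. The substitutions
`a = cⁿ x₂, b = c` and `x₂ = b⁻ⁿ a, x₃ = a⁻¹ bⁿ⁺¹` are mutually inverse and exchange it with
`a² = b²ⁿ⁺¹`. The torus knot group of `2n + 1` surjects onto the dihedral group `D_q` exactly when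
`q ∣ 2n + 1`: a surjection must send `b` to a rotation `r i` (as `2n + 1` is odd) and `a` to a
reflection, so `a² = 1` forces `(2n + 1) i = 0`, while `r i` and a reflection generate `D_q` only
if `i` generates `ℤ/q`. Thus `D_{2n+1}` tells the groups apart.
-/

/-- The single relator `x₂⁻¹ · (x₂x₃)^{n+1} x₃ (x₃⁻¹x₂⁻¹)^{n+1}` of the presentation
`⟨x₂, x₃ | x₂ = (x₂x₃)^{n+1} x₃ (x₃⁻¹x₂⁻¹)^{n+1}⟩`, with `x₂ = of 0`, `x₃ = of 1`. -/
def braidComplementRels (n : ℕ) : Set (FreeGroup (Fin 2)) :=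
  {(FreeGroup.of 0)⁻¹ *
    ((FreeGroup.of 0 * FreeGroup.of 1) ^ (n + 1) * FreeGroup.of 1 *
      ((FreeGroup.of 1)⁻¹ * (FreeGroup.of 0)⁻¹) ^ (n + 1))}

/-- The single relator `a² b^{−(2n+1)}` of the torus knot group
`⟨a, b | a² = b^{2n+1}⟩`, with `a = of 0`, `b = of 1`. -/
def torusKnotRels (n : ℕ) : Set (FreeGroup (Fin 2)) :=
  {(FreeGroup.of 0) ^ 2 * ((FreeGroup.of 1) ^ (2 * n + 1))⁻¹}

section GroupIdentities

variable {G : Type*} [Group G] (n : ℕ)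

theorem braid_relation_iff (x y : G) :
    x = (x * y) ^ (n + 1) * y * (y⁻¹ * x⁻¹) ^ (n + 1) ↔ x * (x * y) ^ n * x = (x * y) ^ (n + 1) := by
  obtain ⟨c, rfl⟩ : ∃ c, y = x⁻¹ * c := ⟨x * y, by group⟩
  rw [← mul_inv_rev, inv_pow, show x * (x⁻¹ * c) = c by group, pow_succ]
  constructor
  · intro h
    nth_rewrite 1 [h]
    group
  · intro h
    nth_rewrite 1 [← h]
    group

theorem torus_relation_of_braid {x y : G} (h : x * (x * y) ^ n * x = (x * y) ^ (n + 1)) :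
    ((x * y) ^ n * x) ^ 2 = (x * y) ^ (2 * n + 1) := by
  rw [sq, mul_assoc, ← mul_assoc x, h, ← pow_add]
  ring_nf

theorem braid_relation_of_torus {a b : G} (h : a ^ 2 = b ^ (2 * n + 1)) :
    (b ^ n)⁻¹ * a * ((b ^ n)⁻¹ * a * (a⁻¹ * b ^ (n + 1))) ^ n * ((b ^ n)⁻¹ * a) =
      ((b ^ n)⁻¹ * a * (a⁻¹ * b ^ (n + 1))) ^ (n + 1) := by
  rw [show (b ^ n)⁻¹ * a * (a⁻¹ * b ^ (n + 1)) = b by rw [pow_succ]; group]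
  calc (b ^ n)⁻¹ * a * b ^ n * ((b ^ n)⁻¹ * a) = (b ^ n)⁻¹ * a ^ 2 := by rw [sq]; group
    _ = b ^ (n + 1) := by rw [h]; group

end GroupIdentities

namespace PresentedGroup

theorem lift_of_eq_one {α : Type*} {rels : Set (FreeGroup α)} :
    ∀ r ∈ rels, FreeGroup.lift (of (rels := rels)) r = 1 := by
  intro r hr
  rw [show FreeGroup.lift of = mk rels from FreeGroup.ext_hom _ _ fun _ => rfl]
  exact one_of_mem hr

theorem closure_of_pair_eq_top {rels : Set (FreeGroup (Fin 2))} :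
    Subgroup.closure {of 0, of 1} = (⊤ : Subgroup (PresentedGroup rels)) :=
  eq_top_iff.mpr fun x _ => generated_by _ _
    (Fin.forall_fin_two.mpr ⟨Subgroup.subset_closure (by simp), Subgroup.subset_closure (by simp)⟩) x

end PresentedGroup

open PresentedGroup

section Presentations

variable {G : Type*} [Group G] (n : ℕ)

theorem braidComplementRels_lift_eq_one_iff (f : Fin 2 → G) :
    (∀ r ∈ braidComplementRels n, FreeGroup.lift f r = 1) ↔
      f 0 * (f 0 * f 1) ^ n * f 0 = (f 0 * f 1) ^ (n + 1) := by
  simp only [braidComplementRels, forall_eq, Set.mem_singleton_iff, map_mul, map_inv, map_pow,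
    FreeGroup.lift_apply_of, inv_mul_eq_one, ← braid_relation_iff]

theorem torusKnotRels_lift_eq_one_iff (f : Fin 2 → G) :
    (∀ r ∈ torusKnotRels n, FreeGroup.lift f r = 1) ↔ f 0 ^ 2 = f 1 ^ (2 * n + 1) := by
  simp only [torusKnotRels, forall_eq, Set.mem_singleton_iff, map_mul, map_inv, map_pow,
    FreeGroup.lift_apply_of, mul_inv_eq_one]

theorem torusKnot_relation :
    (of 0 : PresentedGroup (torusKnotRels n)) ^ 2 = of 1 ^ (2 * n + 1) :=
  (torusKnotRels_lift_eq_one_iff n _).mp lift_of_eq_one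

theorem braidComplement_relation :
    (of 0 : PresentedGroup (braidComplementRels n)) * (of 0 * of 1) ^ n * of 0 =
      (of 0 * of 1) ^ (n + 1) :=
  (braidComplementRels_lift_eq_one_iff n _).mp lift_of_eq_one

end Presentations

noncomputable def braidComplementToTorusKnot (n : ℕ) :
    PresentedGroup (braidComplementRels n) →* PresentedGroup (torusKnotRels n) :=
  toGroup (f := ![(of 1 ^ n)⁻¹ * of 0, (of 0)⁻¹ * of 1 ^ (n + 1)])
    ((braidComplementRels_lift_eq_one_iff n _).mpr (braid_relation_of_torus n (torusKnot_relation n)))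

noncomputable def torusKnotToBraidComplement (n : ℕ) :
    PresentedGroup (torusKnotRels n) →* PresentedGroup (braidComplementRels n) :=
  toGroup (f := ![(of 0 * of 1) ^ n * of 0, of 0 * of 1])
    ((torusKnotRels_lift_eq_one_iff n _).mpr (torus_relation_of_braid n (braidComplement_relation n)))

noncomputable def braidComplementEquivTorusKnot (n : ℕ) :
    PresentedGroup (braidComplementRels n) ≃* PresentedGroup (torusKnotRels n) :=
  MonoidHom.toMulEquiv (braidComplementToTorusKnot n) (torusKnotToBraidComplement n)
    (ext <| Fin.forall_fin_two.mpr <| by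
      simp [braidComplementToTorusKnot, torusKnotToBraidComplement, toGroup.of, pow_succ])
    (ext <| Fin.forall_fin_two.mpr <| by
      simp [braidComplementToTorusKnot, torusKnotToBraidComplement, toGroup.of, pow_succ])

namespace DihedralGroup

variable {q : ℕ}

theorem sr_pow_of_odd (i : ZMod q) {k : ℕ} (hk : Odd k) : sr i ^ k = sr i := by
  obtain ⟨t, rfl⟩ := hk
  rw [pow_succ, pow_mul, sq, sr_mul_self, one_pow, one_mul]

/-- The subgroup generated by `r i` and `sr j`. -/
def rotReflSubgroup (i j : ZMod q) : Subgroup (DihedralGroup q) where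
  carrier := {x | match x with
    | r k => k ∈ AddSubgroup.zmultiples i
    | sr k => k - j ∈ AddSubgroup.zmultiples i}
  one_mem' := zero_mem (AddSubgroup.zmultiples i)
  mul_mem' := by
    rintro (k | k) (l | l) hk hl <;>
      simp only [Set.mem_ofPred_eq, r_mul_r, r_mul_sr, sr_mul_r, sr_mul_sr] at hk hl ⊢
    · exact add_mem hk hl
    · rw [sub_right_comm]
      exact sub_mem hl hk
    · rw [← sub_add_eq_add_sub]
      exact add_mem hk hl
    · rw [← sub_sub_sub_cancel_right l k j]
      exact sub_mem hl hk
  inv_mem' := by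
    rintro (k | k) hk <;> simp only [Set.mem_ofPred_eq, inv_r, inv_sr] at hk ⊢
    · exact neg_mem hk
    · exact hk

@[simp]
theorem mem_rotReflSubgroup_r {i j k : ZMod q} :
    r k ∈ rotReflSubgroup i j ↔ k ∈ AddSubgroup.zmultiples i := Iff.rfl

@[simp]
theorem mem_rotReflSubgroup_sr {i j k : ZMod q} :
    sr k ∈ rotReflSubgroup i j ↔ k - j ∈ AddSubgroup.zmultiples i := Iff.rfl

theorem one_mem_zmultiples_of_closure_eq_top {i j : ZMod q}
    (h : Subgroup.closure {sr j, r i} = ⊤) : (1 : ZMod q) ∈ AddSubgroup.zmultiples i := by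
  have hle : Subgroup.closure {sr j, r i} ≤ rotReflSubgroup i j := by
    rw [Subgroup.closure_le, Set.pair_subset_iff]
    simp [AddSubgroup.mem_zmultiples i]
  exact hle (h ▸ Subgroup.mem_top (r 1))

theorem closure_pair_r_ne_top (i j : ZMod q) : Subgroup.closure {r i, r j} ≠ ⊤ := by
  intro h
  have hle : Subgroup.closure {r i, r j} ≤ Subgroup.zpowers (r 1 : DihedralGroup q) := by
    rw [Subgroup.closure_le, Set.pair_subset_iff]
    exact ⟨⟨(i.cast : ℤ), by simp⟩, ⟨(j.cast : ℤ), by simp⟩⟩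
  obtain ⟨z, hz⟩ := hle (h ▸ Subgroup.mem_top (sr 0))
  simp only [r_one_zpow] at hz
  cases hz

theorem dvd_of_closure_eq_top {A B : DihedralGroup q} (hgen : Subgroup.closure {A, B} = ⊤)
    {k : ℕ} (hk : Odd k) (hrel : A ^ 2 = B ^ k) : q ∣ k := by
  rcases A with j | j <;> rcases B with i | i
  · exact absurd hgen (closure_pair_r_ne_top j i)
  · rw [sr_pow_of_odd i hk, sq, r_mul_r] at hrel
    cases hrel
  · rw [sq, sr_mul_self, r_pow, one_def, r.injEq] at hrel
    obtain ⟨z, hz⟩ := AddSubgroup.mem_zmultiples_iff.mp (one_mem_zmultiples_of_closure_eq_top hgen)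
    rw [← ZMod.natCast_eq_zero_iff, ← mul_one (k : ZMod q), ← hz, mul_smul_comm, mul_comm, ← hrel,
      smul_zero]
  · rw [sr_pow_of_odd i hk, sq, sr_mul_self, one_def] at hrel
    cases hrel

end DihedralGroup

open DihedralGroup

theorem exists_surjective_torusKnot_to_dihedral {n q : ℕ} (hq : q ∣ 2 * n + 1) :
    ∃ φ : PresentedGroup (torusKnotRels n) →* DihedralGroup q, Function.Surjective φ := by
  have hrel : (sr 0 : DihedralGroup q) ^ 2 = r 1 ^ (2 * n + 1) := by
    rw [sq, sr_mul_self, r_one_pow, (ZMod.natCast_eq_zero_iff _ _).mpr hq, r_zero]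
  refine ⟨toGroup ((torusKnotRels_lift_eq_one_iff n ![sr 0, r 1]).mpr hrel), ?_⟩
  rintro (i | i) <;> obtain ⟨k, rfl⟩ := ZMod.intCast_surjective i
  · exact ⟨of 1 ^ k, by simp [toGroup.of]⟩
  · exact ⟨of 0 * of 1 ^ k, by simp [toGroup.of]⟩

theorem dvd_of_surjective_torusKnot_to_dihedral {n q : ℕ}
    {φ : PresentedGroup (torusKnotRels n) →* DihedralGroup q} (hφ : Function.Surjective φ) :
    q ∣ 2 * n + 1 := by
  refine dvd_of_closure_eq_top (A := φ (of 0)) (B := φ (of 1)) ?_ (odd_two_mul_add_one n)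
    (by rw [← map_pow, torusKnot_relation, map_pow])
  rw [← Set.image_pair, ← MonoidHom.map_closure, closure_of_pair_eq_top,
    ← MonoidHom.range_eq_map, MonoidHom.range_eq_top.mpr hφ]

theorem isEmpty_torusKnot_mulEquiv_of_lt {m n : ℕ} (h : m < n) :
    IsEmpty (PresentedGroup (torusKnotRels m) ≃* PresentedGroup (torusKnotRels n)) := by
  refine ⟨fun e => ?_⟩
  obtain ⟨φ, hφ⟩ := exists_surjective_torusKnot_to_dihedral (dvd_refl (2 * n + 1))
  have hdvd := dvd_of_surjective_torusKnot_to_dihedral (φ := φ.comp e.toMonoidHom)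
    (hφ.comp e.surjective)
  exact Nat.not_dvd_of_pos_of_lt (by omega) (by omega) hdvd

/-- The group `⟨x₂, x₃ | x₂ = (x₂x₃)^{n+1} x₃ (x₃⁻¹x₂⁻¹)^{n+1}⟩` is
isomorphic to the fundamental group of the complement of the `(2, 2n+1)` torus knot,
i.e. to `⟨a, b | a² = b^{2n+1}⟩`; consequently, for distinct `n` these groups are
pairwise non-isomorphic. -/
theorem stmt_10 :
    (∀ n : ℕ, Nonempty (PresentedGroup (braidComplementRels n) ≃* PresentedGroup (torusKnotRels n))) ∧
    (∀ m n : ℕ, m ≠ n →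
      IsEmpty (PresentedGroup (braidComplementRels m) ≃* PresentedGroup (braidComplementRels n))) := by
  refine ⟨fun n => ⟨braidComplementEquivTorusKnot n⟩, fun m n hmn => ⟨fun e => ?_⟩⟩
  let e' := ((braidComplementEquivTorusKnot m).symm.trans e).trans (braidComplementEquivTorusKnot n)
  rcases hmn.lt_or_gt with h | h
  · exact (isEmpty_torusKnot_mulEquiv_of_lt h).false e'
  · exact (isEmpty_torusKnot_mulEquiv_of_lt h).false e'.symm
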